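/- For 0 < ε < (√6 − 2)/2, sup over product measures Q₁ × Q₂ of E[|10 − D₁ − D₂|] equals 3, where Q₁ ranges over probability measures on [1−ε,3+ε] with mean 2 and second moment 5, and Q₂ ranges over probability measures on [0,∞) with mean 8 and second moment 73. -/

import Mathlib

open MeasureTheory ProbabilityTheory Set
open scoped ENNReal

/-!
Condition on `D₂ = s` and put `u = 10 - s`. Since `Q₁` has mean `2` and variance `1`,
Jensen gives `E|D₁ - u| ≤ √((u - 2)² + 1)`, which lies below the parabola
`(u - 2)²/6 + 3/2` as long as `(u - 2)² ≤ 3`. When `|u - 2| > √3 ≥ 1 + ε`, the point `u` is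
outside the support of `Q₁` and `E|D₁ - u| = |u - 2|`, again below the parabola. Integrating
the parabola against `Q₂` gives `Var(D₂)/6 + 3/2 = 3`, and the bound is attained by
`Q₁ = (δ₁ + δ₃)/2`, `Q₂ = (δ₅ + δ₁₁)/2`.
-/

noncomputable def twoPoint {α : Type*} [MeasurableSpace α] (a b : α) : Measure α :=
  (2⁻¹ : ℝ≥0∞) • (Measure.dirac a + Measure.dirac b)

section TwoPoint

variable {α E : Type*} [MeasurableSpace α] [NormedAddCommGroup E] (a b : α)

instance : IsProbabilityMeasure (twoPoint a b) :=
  ⟨by simp [twoPoint, ENNReal.inv_two_add_inv_two]⟩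

variable [MeasurableSingletonClass α]

lemma twoPoint_compl_eq_zero {s : Set α} (ha : a ∈ s) (hb : b ∈ s) :
    twoPoint a b sᶜ = 0 := by
  simp [twoPoint, Measure.dirac_apply, ha, hb]

lemma integrable_twoPoint (f : α → E) : Integrable f (twoPoint a b) :=
  ((integrable_dirac enorm_lt_top).add_measure (integrable_dirac enorm_lt_top)).smul_measure
    (by simp)

lemma integral_twoPoint [NormedSpace ℝ E] [CompleteSpace E] (f : α → E) :
    ∫ x, f x ∂twoPoint a b = (2⁻¹ : ℝ) • (f a + f b) := by
  rw [twoPoint, integral_smul_measure, integral_add_measure (integrable_dirac enorm_lt_top)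
    (integrable_dirac enorm_lt_top), integral_dirac, integral_dirac]
  simp

end TwoPoint

lemma sq_integral_abs_le_integral_sq {Ω : Type*} [MeasurableSpace Ω] {μ : Measure Ω}
    [IsProbabilityMeasure μ] {X : Ω → ℝ} (hX : MemLp X 2 μ) :
    (∫ ω, |X ω| ∂μ) ^ 2 ≤ ∫ ω, X ω ^ 2 ∂μ := by
  have h := variance_eq_sub hX.abs
  simp only [Pi.pow_apply, Pi.abs_apply, sq_abs] at h
  linarith [variance_nonneg |X| μ]

section MeasureOnReal

variable {μ : Measure ℝ} [IsProbabilityMeasure μ]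

lemma integral_sub_sq (hμ : MemLp id 2 μ) (a : ℝ) :
    ∫ t, (t - a) ^ 2 ∂μ = ∫ t, t ^ 2 ∂μ - 2 * a * ∫ t, t ∂μ + a ^ 2 := by
  have h1 : Integrable (fun t : ℝ => t) μ := hμ.integrable one_le_two
  have h2 : Integrable (fun t : ℝ => t ^ 2) μ := hμ.integrable_sq
  have h1' : Integrable (fun t : ℝ => 2 * t * a) μ := (h1.const_mul 2).mul_const a
  simp_rw [sub_sq]
  rw [integral_add (f := fun t => t ^ 2 - 2 * t * a) (h2.sub h1') (integrable_const _),
    integral_sub h2 h1', integral_mul_const, integral_const_mul, integral_const]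
  simp only [probReal_univ, smul_eq_mul, one_mul]
  ring

lemma memLp_id_of_ae_mem_Icc {a b : ℝ} (h : ∀ᵐ t ∂μ, t ∈ Icc a b) (p : ℝ≥0∞) :
    MemLp id p μ :=
  MemLp.of_bound aestronglyMeasurable_id (max |a| |b|)
    (h.mono fun _ ht => abs_le_max_abs_abs ht.1 ht.2)

lemma integral_abs_sub_le_of_unitVariance {c : ℝ}
    (hsupp : ∀ᵐ t ∂μ, t ∈ Icc (c - √3) (c + √3)) (h1 : ∫ t, t ∂μ = c)
    (h2 : ∫ t, t ^ 2 ∂μ = c ^ 2 + 1) (u : ℝ) :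
    ∫ t, |t - u| ∂μ ≤ (u - c) ^ 2 / 6 + 3 / 2 := by
  have hμ : MemLp id 2 μ := memLp_id_of_ae_mem_Icc hsupp 2
  have hint : Integrable (fun t : ℝ => t) μ := hμ.integrable one_le_two
  rcases le_or_gt ((u - c) ^ 2) 3 with hsmall | hlarge
  · have hsq : (∫ t, |t - u| ∂μ) ^ 2 ≤ (u - c) ^ 2 + 1 := calc
      _ ≤ ∫ t, (t - u) ^ 2 ∂μ := sq_integral_abs_le_integral_sq (hμ.sub (memLp_const u))
      _ = (u - c) ^ 2 + 1 := by rw [integral_sub_sq hμ, h1, h2]; ring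
    -- `(y / 6 + 3 / 2) ^ 2 - (y + 1) = (3 - y) * (15 - y) / 36` with `y = (u - c) ^ 2`
    have hbound : (u - c) ^ 2 + 1 ≤ ((u - c) ^ 2 / 6 + 3 / 2) ^ 2 := by
      nlinarith [sq_nonneg (u - c)]
    exact abs_le_of_sq_le_sq' (hsq.trans hbound) (by positivity) |>.2
  · -- `u` lies outside the support of `μ`, so `t - u` has constant sign.
    have hmean : ∫ t, |t - u| ∂μ = |u - c| := by
      have hsub : ∫ t, (t - u) ∂μ = c - u := by
        rw [integral_sub hint (integrable_const u), h1, integral_const]; simp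
      have h3 : √3 < |u - c| :=
        Real.sqrt_sq_eq_abs (u - c) ▸ Real.sqrt_lt_sqrt (by norm_num) hlarge
      rcases lt_abs.mp h3 with hright | hleft
      · have hae : (fun t => |t - u|) =ᵐ[μ] fun t => -(t - u) := by
          filter_upwards [hsupp] with t ht
          exact abs_of_nonpos (by linarith [ht.2])
        rw [integral_congr_ae hae, integral_neg, hsub,
          abs_of_pos (by linarith [Real.sqrt_nonneg 3])]
        ring
      · have hae : (fun t => |t - u|) =ᵐ[μ] fun t => t - u := by
          filter_upwards [hsupp] with t ht
          exact abs_of_nonneg (by linarith [ht.1])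
        rw [integral_congr_ae hae, hsub, abs_of_neg (by linarith [Real.sqrt_nonneg 3])]
        ring
    rw [hmean]
    nlinarith [sq_abs (u - c), sq_nonneg (|u - c| - 3)]

end MeasureOnReal

lemma integrable_abs_sub_fst_sub_snd {μ ν : Measure ℝ} [IsFiniteMeasure μ] [IsFiniteMeasure ν]
    (hμ : Integrable id μ) (hν : Integrable id ν) (w : ℝ) :
    Integrable (fun p : ℝ × ℝ => |w - p.1 - p.2|) (μ.prod ν) :=
  (((integrable_const w).sub (hμ.comp_fst ν)).sub (hν.comp_snd μ)).abs

lemma integral_abs_sub_fst_sub_snd_le {μ ν : Measure ℝ} [IsProbabilityMeasure μ]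
    [IsProbabilityMeasure ν] {c : ℝ} (hsupp : ∀ᵐ t ∂μ, t ∈ Icc (c - √3) (c + √3))
    (h1 : ∫ t, t ∂μ = c) (h2 : ∫ t, t ^ 2 ∂μ = c ^ 2 + 1) (hν : MemLp id 2 ν) (w : ℝ) :
    ∫ p, |w - p.1 - p.2| ∂μ.prod ν ≤ (∫ s, (s - (w - c)) ^ 2 ∂ν) / 6 + 3 / 2 := by
  have hμ : Integrable id μ := memLp_id_of_ae_mem_Icc hsupp 1 |>.integrable le_rfl
  have hslice (s : ℝ) : ∫ t, |w - t - s| ∂μ ≤ (s - (w - c)) ^ 2 / 6 + 3 / 2 := by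
    convert integral_abs_sub_le_of_unitVariance hsupp h1 h2 (w - s) using 2
    · funext t; rw [abs_sub_comm]; congr 1; ring
    · ring
  have hint := integrable_abs_sub_fst_sub_snd hμ (hν.integrable one_le_two) w
  have hquad : Integrable (fun s => (s - (w - c)) ^ 2 / 6) ν :=
    (hν.sub (memLp_const _)).integrable_sq.div_const 6
  calc ∫ p, |w - p.1 - p.2| ∂μ.prod ν = ∫ s, ∫ t, |w - t - s| ∂μ ∂ν :=
        integral_prod_symm _ hint
    _ ≤ ∫ s, ((s - (w - c)) ^ 2 / 6 + 3 / 2) ∂ν :=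
        integral_mono hint.integral_prod_right (hquad.add (integrable_const _)) hslice
    _ = (∫ s, (s - (w - c)) ^ 2 ∂ν) / 6 + 3 / 2 := by
        rw [integral_add hquad (integrable_const _), integral_div, integral_const]
        simp

/-- For 0 < ε < (√6−2)/2, the supremum of E[|10 − D₁ − D₂|] over product measures
Q₁ × Q₂, with Q₁ on [1−ε,3+ε] having mean 2 and second moment 5, and Q₂ on ℝ₊
having mean 8 and second moment 73, equals 3. -/
theorem sup_product_abs_eq_three (ε : ℝ) (hε : 0 < ε)
    (hε' : ε < (Real.sqrt 6 - 2) / 2) :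
    sSup {r : ℝ | ∃ Q₁ Q₂ : Measure ℝ,
      IsProbabilityMeasure Q₁ ∧ IsProbabilityMeasure Q₂ ∧
      Q₁ (Set.Icc (1 - ε) (3 + ε))ᶜ = 0 ∧
      (∫ t, t ∂Q₁) = 2 ∧ (∫ t, t ^ 2 ∂Q₁) = 5 ∧
      Q₂ (Set.Ici (0:ℝ))ᶜ = 0 ∧ Integrable id Q₂ ∧
      Integrable (fun t => t ^ 2) Q₂ ∧
      (∫ t, t ∂Q₂) = 8 ∧ (∫ t, t ^ 2 ∂Q₂) = 73 ∧
      r = ∫ p, |10 - p.1 - p.2| ∂(Q₁.prod Q₂)} = 3 := by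
  have hε3 : 1 + ε ≤ √3 := by
    have h6 : √6 < 5 / 2 := (Real.sqrt_lt' (by norm_num)).2 (by norm_num)
    have h3 : 3 / 2 ≤ √3 := Real.le_sqrt_of_sq_le (by norm_num)
    linarith
  refine IsGreatest.csSup_eq ⟨⟨twoPoint 1 3, twoPoint 5 11, inferInstance, inferInstance,
    twoPoint_compl_eq_zero _ _ ⟨by linarith, by linarith⟩ ⟨by linarith, by linarith⟩, ?_, ?_,
    twoPoint_compl_eq_zero _ _ (by norm_num) (by norm_num), integrable_twoPoint _ _ _,
    integrable_twoPoint _ _ _, ?_, ?_, ?_⟩, ?_⟩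
  · norm_num [integral_twoPoint]
  · norm_num [integral_twoPoint]
  · norm_num [integral_twoPoint]
  · norm_num [integral_twoPoint]
  · rw [integral_prod _ (integrable_abs_sub_fst_sub_snd (integrable_twoPoint _ _ _)
      (integrable_twoPoint _ _ _) 10)]
    norm_num [integral_twoPoint, abs_of_nonneg, abs_of_nonpos]
  rintro r ⟨Q₁, Q₂, _, _, hQ₁, h11, h12, -, -, hQ₂, h21, h22, rfl⟩
  have hsupp : ∀ᵐ t ∂Q₁, t ∈ Icc (2 - √3) (2 + √3) := by
    filter_upwards [mem_ae_iff.2 hQ₁] with t ht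
    exact ⟨by linarith [ht.1], by linarith [ht.2]⟩
  have hmem : MemLp id 2 Q₂ := (memLp_two_iff_integrable_sq aestronglyMeasurable_id).2 hQ₂
  calc _ ≤ (∫ s, (s - (10 - 2)) ^ 2 ∂Q₂) / 6 + 3 / 2 :=
        integral_abs_sub_fst_sub_snd_le hsupp h11 (by rw [h12]; norm_num) hmem 10
    _ = 3 := by rw [integral_sub_sq hmem, h21, h22]; norm_num
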